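/- (Large-frequency eigenvalue asymptotics, case ρ+θ > 1) Assume additionally ρ + θ > 1. Then there exist N > 1 and functions μ₁, μ₂, μ₃, μ₄ : (N,∞) → ℂ such that for every r > N the multiset of roots (with multiplicity) of the characteristic polynomial of B(r) is {μ₁(r), μ₂(r), μ₃(r), μ₄(r)}, and as r → ∞: μ₁(r) − b²r^{2−2θ} = O(r^{1+2ρ−2θ}), μ₂(r) − a²r^{2−2θ} = O(r^{1+2ρ−2θ}), μ₃(r) − (r^{2θ} + r^{2ρ} − b²r^{2−2θ}) = O(r^{1+2ρ−2θ}), and μ₄(r) − (r^{2θ} + r^{2ρ} − a²r^{2−2θ}) = O(r^{1+2ρ−2θ}). -/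

import Mathlib

/-!
`B(r)` only couples the coordinates 1, 3 and 2, 4. With `σ = (r^{2ρ} + r^{2θ})/2` and `c ∈ {b, a}`,
each of the two blocks has characteristic polynomial `X² - 2σX + c²r²`, with roots
`σ ± √(σ² - c²r²)`, real as soon as `|c| r ≤ r^{2θ}/2` (true for large `r` because `2θ > 1`).
The small root `λ` satisfies `λ (r^{2ρ} + r^{2θ} - λ) = c²r²`, i.e.
`λ - c²r^{2-2θ} = λ (λ - r^{2ρ}) r^{-2θ}`. Since `0 ≤ λ ≤ 2c²r^{2-2θ}` and `2 - 2θ < 2ρ`, the right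
side is `O(r^{2+2ρ-4θ}) ⊆ O(r^{1+2ρ-2θ})`. The large root is `2σ - λ`.
-/

noncomputable section

/-- The matrix `B₀` with rows (1,0,1,0), (0,1,0,1), (1,0,1,0), (0,1,0,1). -/
def B0 : Matrix (Fin 4) (Fin 4) ℂ :=
  !![1,0,1,0; 0,1,0,1; 1,0,1,0; 0,1,0,1]

/-- The matrix `B₁ = diag(−b, −a, b, a)`. -/
def B1 (a b : ℝ) : Matrix (Fin 4) (Fin 4) ℂ :=
  !![-(b:ℂ),0,0,0; 0,-(a:ℂ),0,0; 0,0,(b:ℂ),0; 0,0,0,(a:ℂ)]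

/-- The coefficient matrix `B(r) = (1/2)(r^{2ρ}+r^{2θ})B₀ + i r B₁`. -/
def Bmat (a b ρ θ r : ℝ) : Matrix (Fin 4) (Fin 4) ℂ :=
  (((1/2) * (r ^ (2*ρ) + r ^ (2*θ)) : ℝ) : ℂ) • B0 + (Complex.I * (r : ℂ)) • B1 a b

open Asymptotics Filter Topology Polynomial

def lowerRoot (s p : ℝ) : ℝ := s - √(s ^ 2 - p)

def upperRoot (s p : ℝ) : ℝ := s + √(s ^ 2 - p)

theorem lowerRoot_add_upperRoot (s p : ℝ) : lowerRoot s p + upperRoot s p = 2 * s := by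
  rw [lowerRoot, upperRoot]; ring

theorem lowerRoot_mul_upperRoot {s p : ℝ} (h : p ≤ s ^ 2) :
    lowerRoot s p * upperRoot s p = p := by
  rw [lowerRoot, upperRoot]
  linear_combination -Real.sq_sqrt (sub_nonneg.mpr h)

theorem le_upperRoot (s p : ℝ) : s ≤ upperRoot s p :=
  le_add_of_nonneg_right (Real.sqrt_nonneg _)

theorem lowerRoot_nonneg {s p : ℝ} (hs : 0 ≤ s) (hp : 0 ≤ p) : 0 ≤ lowerRoot s p := by
  rw [lowerRoot, sub_nonneg]
  calc √(s ^ 2 - p) ≤ √(s ^ 2) := Real.sqrt_le_sqrt (by linarith)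
    _ = s := Real.sqrt_sq hs

theorem isBigO_rpow_rpow_atTop_of_le {α β : ℝ} (h : α ≤ β) :
    (fun x : ℝ => x ^ α) =O[atTop] fun x => x ^ β := by
  refine IsBigO.of_bound' ?_
  filter_upwards [eventually_ge_atTop 1] with x hx
  rw [Real.norm_of_nonneg (by positivity), Real.norm_of_nonneg (by positivity)]
  exact Real.rpow_le_rpow_of_exponent_le hx h

theorem eventually_abs_mul_le_rpow_div_two {θ : ℝ} (hθ : 1 / 2 < θ) (c : ℝ) :
    ∀ᶠ r in atTop, |c * r| ≤ r ^ (2 * θ) / 2 := by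
  have hpow := (tendsto_rpow_atTop (by linarith : 0 < 2 * θ - 1)).eventually_ge_atTop (2 * |c|)
  filter_upwards [hpow, eventually_gt_atTop 0] with r hr hr0
  rw [abs_mul, abs_of_pos hr0, show 2 * θ = 2 * θ - 1 + 1 by ring, Real.rpow_add_one hr0.ne']
  nlinarith

theorem charpoly_smul_B0_add_smul_B1 (s t : ℂ) (a b : ℝ) :
    (s • B0 + t • B1 a b).charpoly
      = (X ^ 2 - C (2 * s) * X - C (t * b) ^ 2) * (X ^ 2 - C (2 * s) * X - C (t * a) ^ 2) := by
  simp [Matrix.charpoly, Matrix.charmatrix, B0, B1, Matrix.det_succ_row_zero, Fin.sum_univ_succ,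
    Matrix.submatrix, Fin.succAbove, map_ofNat]
  ring

theorem X_sq_sub_C_mul_X_add_C_eq_mul {R : Type*} [CommRing R] {σ p μ ν : R}
    (hsum : μ + ν = σ) (hprod : μ * ν = p) :
    (X ^ 2 - C σ * X + C p : R[X]) = (X - C μ) * (X - C ν) := by
  rw [← hsum, ← hprod, C_add, C_mul]
  ring

def coeffB0 (ρ θ r : ℝ) : ℝ := 1 / 2 * (r ^ (2 * ρ) + r ^ (2 * θ))

theorem two_mul_coeffB0 (ρ θ r : ℝ) : 2 * coeffB0 ρ θ r = r ^ (2 * ρ) + r ^ (2 * θ) := by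
  rw [coeffB0]; ring

section LowerRoot

variable {ρ θ c r : ℝ}

theorem rpow_div_two_le_coeffB0 (hr : 0 < r) : r ^ (2 * θ) / 2 ≤ coeffB0 ρ θ r := by
  rw [coeffB0]; linarith [Real.rpow_pos_of_pos hr (2 * ρ)]

theorem sq_le_coeffB0_sq (hr : 0 < r) (hcr : |c * r| ≤ r ^ (2 * θ) / 2) :
    (c * r) ^ 2 ≤ coeffB0 ρ θ r ^ 2 := by
  have := rpow_div_two_le_coeffB0 (ρ := ρ) (θ := θ) hr
  exact sq_le_sq' (by linarith [neg_abs_le (c * r)]) (by linarith [le_abs_self (c * r)])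

theorem lowerRoot_coeffB0_nonneg (hr : 0 < r) :
    0 ≤ lowerRoot (coeffB0 ρ θ r) ((c * r) ^ 2) :=
  lowerRoot_nonneg ((div_pos (Real.rpow_pos_of_pos hr _) two_pos).le.trans
    (rpow_div_two_le_coeffB0 hr)) (sq_nonneg _)

theorem lowerRoot_coeffB0_mul (hr : 0 < r) (hcr : |c * r| ≤ r ^ (2 * θ) / 2) :
    lowerRoot (coeffB0 ρ θ r) ((c * r) ^ 2)
        * (r ^ (2 * ρ) + r ^ (2 * θ) - lowerRoot (coeffB0 ρ θ r) ((c * r) ^ 2)) = (c * r) ^ 2 := by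
  rw [← two_mul_coeffB0, ← lowerRoot_add_upperRoot, add_sub_cancel_left]
  exact lowerRoot_mul_upperRoot (sq_le_coeffB0_sq hr hcr)

theorem lowerRoot_coeffB0_mul_rpow_le (hr : 0 < r) (hcr : |c * r| ≤ r ^ (2 * θ) / 2) :
    lowerRoot (coeffB0 ρ θ r) ((c * r) ^ 2) * r ^ (2 * θ) ≤ 2 * (c * r) ^ 2 := by
  have hupper :=
    (rpow_div_two_le_coeffB0 (ρ := ρ) (θ := θ) hr).trans (le_upperRoot _ ((c * r) ^ 2))
  have hprod := lowerRoot_mul_upperRoot (sq_le_coeffB0_sq (ρ := ρ) hr hcr)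
  calc lowerRoot (coeffB0 ρ θ r) ((c * r) ^ 2) * r ^ (2 * θ)
      ≤ lowerRoot (coeffB0 ρ θ r) ((c * r) ^ 2)
          * (2 * upperRoot (coeffB0 ρ θ r) ((c * r) ^ 2)) :=
        mul_le_mul_of_nonneg_left (by linarith) (lowerRoot_coeffB0_nonneg hr)
    _ = 2 * (c * r) ^ 2 := by linear_combination 2 * hprod

end LowerRoot

theorem lowerRoot_sub_isBigO {ρ θ : ℝ} (hθ : 1 / 2 < θ) (hsum : 1 < ρ + θ) (c : ℝ) :
    (fun r => lowerRoot (coeffB0 ρ θ r) ((c * r) ^ 2) - c ^ 2 * r ^ (2 - 2 * θ))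
      =O[atTop] fun r => r ^ (1 + 2 * ρ - 2 * θ) := by
  set l := fun r => lowerRoot (coeffB0 ρ θ r) ((c * r) ^ 2)
  have hgood : ∀ᶠ r in atTop, 0 < r ∧ |c * r| ≤ r ^ (2 * θ) / 2 :=
    (eventually_gt_atTop 0).and (eventually_abs_mul_le_rpow_div_two hθ c)
  have hrpow {r : ℝ} (hr : 0 < r) : r ^ (2 - 2 * θ) = r ^ 2 / r ^ (2 * θ) := by
    rw [Real.rpow_sub hr, Real.rpow_two]
  have hl : l =O[atTop] fun r => r ^ (2 - 2 * θ) := by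
    refine IsBigO.of_bound (2 * c ^ 2) ?_
    filter_upwards [hgood] with r ⟨hr, hcr⟩
    have hT := Real.rpow_pos_of_pos hr (2 * θ)
    rw [Real.norm_of_nonneg (lowerRoot_coeffB0_nonneg hr),
      Real.norm_of_nonneg (Real.rpow_nonneg hr.le _), hrpow hr, mul_div_assoc', le_div_iff₀ hT]
    linarith [lowerRoot_coeffB0_mul_rpow_le (ρ := ρ) hr hcr]
  have hid : (fun r => l r - c ^ 2 * r ^ (2 - 2 * θ))
      =ᶠ[atTop] fun r => l r * (l r - r ^ (2 * ρ)) * r ^ (-(2 * θ)) := by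
    filter_upwards [hgood] with r ⟨hr, hcr⟩
    have hT := Real.rpow_pos_of_pos hr (2 * θ)
    rw [hrpow hr, Real.rpow_neg hr.le]
    have hmul : l r * (r ^ (2 * ρ) + r ^ (2 * θ) - l r) = (c * r) ^ 2 :=
      lowerRoot_coeffB0_mul hr hcr
    field_simp
    linear_combination hmul
  calc (fun r => l r - c ^ 2 * r ^ (2 - 2 * θ))
      =ᶠ[atTop] fun r => l r * (l r - r ^ (2 * ρ)) * r ^ (-(2 * θ)) := hid
    _ =O[atTop] fun r => r ^ (2 - 2 * θ) * r ^ (2 * ρ) * r ^ (-(2 * θ)) :=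
      (hl.mul ((hl.trans (isBigO_rpow_rpow_atTop_of_le (by linarith))).sub
        (isBigO_refl _ _))).mul (isBigO_refl _ _)
    _ =ᶠ[atTop] fun r => r ^ (2 - 2 * θ + 2 * ρ + -(2 * θ)) := by
      filter_upwards [eventually_gt_atTop 0] with r hr
      rw [Real.rpow_add hr, Real.rpow_add hr]
    _ =O[atTop] fun r => r ^ (1 + 2 * ρ - 2 * θ) := isBigO_rpow_rpow_atTop_of_le (by linarith)

theorem upperRoot_sub_isBigO {ρ θ : ℝ} (hθ : 1 / 2 < θ) (hsum : 1 < ρ + θ) (c : ℝ) :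
    (fun r => upperRoot (coeffB0 ρ θ r) ((c * r) ^ 2)
        - (r ^ (2 * θ) + r ^ (2 * ρ) - c ^ 2 * r ^ (2 - 2 * θ)))
      =O[atTop] fun r => r ^ (1 + 2 * ρ - 2 * θ) := by
  refine (lowerRoot_sub_isBigO hθ hsum c).neg_left.congr_left fun r => ?_
  linarith [lowerRoot_add_upperRoot (coeffB0 ρ θ r) ((c * r) ^ 2), two_mul_coeffB0 ρ θ r]

theorem charpoly_Bmat (a b ρ θ r : ℝ) :
    (Bmat a b ρ θ r).charpoly
      = (X ^ 2 - C (2 * (coeffB0 ρ θ r : ℂ)) * X + C (((b * r) ^ 2 : ℝ) : ℂ)) *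
        (X ^ 2 - C (2 * (coeffB0 ρ θ r : ℂ)) * X + C (((a * r) ^ 2 : ℝ) : ℂ)) := by
  have hsq (c : ℝ) : -C (Complex.I * r * c) ^ 2 = C (((c * r) ^ 2 : ℝ) : ℂ) := by
    rw [← C_pow, ← C_neg]
    push_cast
    rw [mul_pow, mul_pow, Complex.I_sq]
    ring_nf
  rw [Bmat, charpoly_smul_B0_add_smul_B1, sub_eq_add_neg _ (C _ ^ 2), sub_eq_add_neg _ (C _ ^ 2),
    hsq, hsq, coeffB0]

theorem roots_charpoly_Bmat {a b ρ θ r : ℝ} {μ₁ μ₂ μ₃ μ₄ : ℂ}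
    (h₁₃ : μ₁ + μ₃ = 2 * coeffB0 ρ θ r) (h₁₃' : μ₁ * μ₃ = ((b * r) ^ 2 : ℝ))
    (h₂₄ : μ₂ + μ₄ = 2 * coeffB0 ρ θ r) (h₂₄' : μ₂ * μ₄ = ((a * r) ^ 2 : ℝ)) :
    (Bmat a b ρ θ r).charpoly.roots = {μ₁, μ₂, μ₃, μ₄} := by
  rw [charpoly_Bmat, X_sq_sub_C_mul_X_add_C_eq_mul h₁₃ h₁₃',
    X_sq_sub_C_mul_X_add_C_eq_mul h₂₄ h₂₄']
  simp only [ne_eq, mul_eq_zero, X_sub_C_ne_zero, or_self, not_false_eq_true, roots_mul,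
    roots_X_sub_C, Multiset.singleton_add, Multiset.add_cons, Multiset.cons_add,
    Multiset.insert_eq_cons]
  exact Multiset.cons_swap _ _ _

theorem eventually_sq_le_coeffB0_sq {ρ θ : ℝ} (hθ : 1 / 2 < θ) (c : ℝ) :
    ∀ᶠ r in atTop, (c * r) ^ 2 ≤ coeffB0 ρ θ r ^ 2 := by
  filter_upwards [eventually_gt_atTop 0, eventually_abs_mul_le_rpow_div_two hθ c] with r hr hcr
  exact sq_le_coeffB0_sq hr hcr

theorem roots_charpoly_Bmat_eq {a b ρ θ r : ℝ} (ha : (a * r) ^ 2 ≤ coeffB0 ρ θ r ^ 2)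
    (hb : (b * r) ^ 2 ≤ coeffB0 ρ θ r ^ 2) :
    (Bmat a b ρ θ r).charpoly.roots =
      {(lowerRoot (coeffB0 ρ θ r) ((b * r) ^ 2) : ℂ),
        (lowerRoot (coeffB0 ρ θ r) ((a * r) ^ 2) : ℂ),
        (upperRoot (coeffB0 ρ θ r) ((b * r) ^ 2) : ℂ),
        (upperRoot (coeffB0 ρ θ r) ((a * r) ^ 2) : ℂ)} := by
  apply roots_charpoly_Bmat
  · exact_mod_cast lowerRoot_add_upperRoot _ _
  · exact_mod_cast lowerRoot_mul_upperRoot hb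
  · exact_mod_cast lowerRoot_add_upperRoot _ _
  · exact_mod_cast lowerRoot_mul_upperRoot ha

theorem stmt9_general (a b ρ θ : ℝ) (hθ : 1/2 < θ)
    (hsum : 1 < ρ + θ) :
    ∃ N : ℝ, 1 < N ∧ ∃ m₁ m₂ m₃ m₄ : ℝ → ℂ,
      (∀ r : ℝ, N < r →
        (Bmat a b ρ θ r).charpoly.roots = {m₁ r, m₂ r, m₃ r, m₄ r}) ∧
      (fun r : ℝ => m₁ r - ((b^2 * r ^ (2 - 2*θ) : ℝ) : ℂ))
        =O[atTop] (fun r : ℝ => r ^ (1 + 2*ρ - 2*θ)) ∧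
      (fun r : ℝ => m₂ r - ((a^2 * r ^ (2 - 2*θ) : ℝ) : ℂ))
        =O[atTop] (fun r : ℝ => r ^ (1 + 2*ρ - 2*θ)) ∧
      (fun r : ℝ => m₃ r - ((r ^ (2*θ) + r ^ (2*ρ) - b^2 * r ^ (2 - 2*θ) : ℝ) : ℂ))
        =O[atTop] (fun r : ℝ => r ^ (1 + 2*ρ - 2*θ)) ∧
      (fun r : ℝ => m₄ r - ((r ^ (2*θ) + r ^ (2*ρ) - a^2 * r ^ (2 - 2*θ) : ℝ) : ℂ))
        =O[atTop] (fun r : ℝ => r ^ (1 + 2*ρ - 2*θ)) := by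
  obtain ⟨N, hN⟩ := eventually_atTop.mp
    ((eventually_sq_le_coeffB0_sq (ρ := ρ) hθ a).and (eventually_sq_le_coeffB0_sq hθ b))
  refine ⟨max N 2, by simp, fun r => lowerRoot (coeffB0 ρ θ r) ((b * r) ^ 2),
    fun r => lowerRoot (coeffB0 ρ θ r) ((a * r) ^ 2),
    fun r => upperRoot (coeffB0 ρ θ r) ((b * r) ^ 2),
    fun r => upperRoot (coeffB0 ρ θ r) ((a * r) ^ 2), fun r hr => ?_, ?_, ?_, ?_, ?_⟩
  · obtain ⟨ha, hb⟩ := hN r ((le_max_left N 2).trans hr.le)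
    exact roots_charpoly_Bmat_eq ha hb
  all_goals simp only [← Complex.ofReal_sub, Complex.isBigO_ofReal_left]
  · exact lowerRoot_sub_isBigO hθ hsum b
  · exact lowerRoot_sub_isBigO hθ hsum a
  · exact upperRoot_sub_isBigO hθ hsum b
  · exact upperRoot_sub_isBigO hθ hsum a

/-- Large-frequency eigenvalue asymptotics in the case `ρ + θ > 1`. -/
theorem stmt9 (a b ρ θ : ℝ) (ha : 0 < a) (hab : a < b)
    (hρ0 : 0 ≤ ρ) (hρ : ρ < 1/2) (hθ : 1/2 < θ) (hθ1 : θ ≤ 1)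
    (hsum : 1 < ρ + θ) :
    ∃ N : ℝ, 1 < N ∧ ∃ m₁ m₂ m₃ m₄ : ℝ → ℂ,
      (∀ r : ℝ, N < r →
        (Bmat a b ρ θ r).charpoly.roots = {m₁ r, m₂ r, m₃ r, m₄ r}) ∧
      (fun r : ℝ => m₁ r - ((b^2 * r ^ (2 - 2*θ) : ℝ) : ℂ))
        =O[atTop] (fun r : ℝ => r ^ (1 + 2*ρ - 2*θ)) ∧
      (fun r : ℝ => m₂ r - ((a^2 * r ^ (2 - 2*θ) : ℝ) : ℂ))
        =O[atTop] (fun r : ℝ => r ^ (1 + 2*ρ - 2*θ)) ∧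
      (fun r : ℝ => m₃ r - ((r ^ (2*θ) + r ^ (2*ρ) - b^2 * r ^ (2 - 2*θ) : ℝ) : ℂ))
        =O[atTop] (fun r : ℝ => r ^ (1 + 2*ρ - 2*θ)) ∧
      (fun r : ℝ => m₄ r - ((r ^ (2*θ) + r ^ (2*ρ) - a^2 * r ^ (2 - 2*θ) : ℝ) : ℂ))
        =O[atTop] (fun r : ℝ => r ^ (1 + 2*ρ - 2*θ)) :=
  stmt9_general a b ρ θ hθ hsum

end
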